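/- If p12/p1 + q12/q2 > 1 strictly, then the point (p12, q12) lies strictly above the time-sharing line λ_1/p1 + λ_2/q2 = 1, i.e., p12/p1 + q12/q2 > 1 implies the stability region strictly contains the time-sharing triangle {λ_1/p1 + λ_2/q2 < 1, λ_1, λ_2 ≥ 0}. -/

import Mathlib

/-!
If `λ₁/p₁ + λ₂/q₂ < 1`, then either `λ₂ < q₁₂`, and the coefficient of `λ₂` in `R₁` is at most
`1/q₂`, or `λ₂ ≥ q₁₂`, which forces `λ₁ < p₁₂`, and the coefficient of `λ₁` in `R₂` is at most
`1/p₁`; both coefficient bounds are equivalent to `p₁₂/p₁ + q₁₂/q₂ ≥ 1`. Strictness: with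
`s = p₁₂/p₁ + q₁₂/q₂ > 1`, the point `(p₁₂, q₁₂)/s` lies on the time-sharing line but in `R₂`.
-/

def timeSharingRegion (p1 q2 : ℝ) : Set (ℝ × ℝ) :=
  {z | 0 ≤ z.1 ∧ 0 ≤ z.2 ∧ z.1 / p1 + z.2 / q2 < 1}

def stabilityRegion₁ (p1 p12 q12 : ℝ) : Set (ℝ × ℝ) :=
  {z | z.1 / p1 + ((p1 - p12) / (p1 * q12)) * z.2 < 1 ∧ z.2 < q12}

def stabilityRegion₂ (p12 q2 q12 : ℝ) : Set (ℝ × ℝ) :=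
  {z | z.2 / q2 + ((q2 - q12) / (q2 * p12)) * z.1 < 1 ∧ z.1 < p12}

def stabilityRegion (p1 p12 q2 q12 : ℝ) : Set (ℝ × ℝ) :=
  {z | 0 ≤ z.1 ∧ 0 ≤ z.2} ∩ (stabilityRegion₁ p1 p12 q12 ∪ stabilityRegion₂ p12 q2 q12)

section

variable {p p' q q' x y : ℝ}

lemma sub_div_mul_le_one_div (hp : 0 < p) (hq : 0 < q) (hq' : 0 < q')
    (h : 1 ≤ p' / p + q' / q) : (p - p') / (p * q') ≤ 1 / q :=
  calc (p - p') / (p * q') = (1 - p' / p) / q' := by field_simp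
    _ ≤ (q' / q) / q' := by gcongr; linarith
    _ = 1 / q := by field_simp

lemma div_add_mul_lt_one_of_div_add_div_lt_one (hp : 0 < p) (hq : 0 < q) (hq' : 0 < q')
    (h : 1 ≤ p' / p + q' / q) (hy : 0 ≤ y) (hxy : x / p + y / q < 1) :
    x / p + ((p - p') / (p * q')) * y < 1 :=
  calc x / p + ((p - p') / (p * q')) * y ≤ x / p + (1 / q) * y := by
        gcongr x / p + ?_ * y; exact sub_div_mul_le_one_div hp hq hq' h
    _ = x / p + y / q := by ring
    _ < 1 := hxy

lemma lt_of_div_add_div_lt_one (hp : 0 < p) (hq : 0 < q) (h : 1 ≤ p' / p + q' / q)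
    (hy : q' ≤ y) (hxy : x / p + y / q < 1) : x < p' := by
  have : q' / q ≤ y / q := by gcongr
  have : x / p < p' / p := by linarith
  exact (div_lt_div_iff_of_pos_right hp).mp this

end

section

variable {p1 p12 q2 q12 : ℝ}

lemma timeSharingRegion_subset_stabilityRegion (hp1 : 0 < p1) (hp12 : 0 < p12) (hq2 : 0 < q2)
    (hq12 : 0 < q12) (h : 1 ≤ p12 / p1 + q12 / q2) :
    timeSharingRegion p1 q2 ⊆ stabilityRegion p1 p12 q2 q12 := by
  rintro ⟨x, y⟩ ⟨hx, hy, hxy⟩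
  refine ⟨⟨hx, hy⟩, ?_⟩
  rcases lt_or_ge y q12 with hyq | hyq
  · exact Or.inl ⟨div_add_mul_lt_one_of_div_add_div_lt_one hp1 hq2 hq12 h hy hxy, hyq⟩
  · have h' : 1 ≤ q12 / q2 + p12 / p1 := by linarith
    have hyx : y / q2 + x / p1 < 1 := by linarith
    exact Or.inr ⟨div_add_mul_lt_one_of_div_add_div_lt_one hq2 hp1 hp12 h' hx hyx,
      lt_of_div_add_div_lt_one hp1 hq2 h hyq hxy⟩

lemma exists_mem_stabilityRegion_not_mem_timeSharingRegion (hp1 : 0 < p1) (hp12 : 0 < p12)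
    (hq2 : 0 < q2) (hq12 : 0 < q12) (h : 1 < p12 / p1 + q12 / q2) :
    ∃ z ∈ stabilityRegion p1 p12 q2 q12, z ∉ timeSharingRegion p1 q2 := by
  set s := p12 / p1 + q12 / q2
  have hs : 0 < s := by linarith
  refine ⟨(p12 / s, q12 / s), ⟨⟨by positivity, by positivity⟩, Or.inr ⟨?_, ?_⟩⟩, ?_⟩
  · have : q12 / s / q2 + (q2 - q12) / (q2 * p12) * (p12 / s) = 1 / s := by
      field_simp; ring
    rw [this, div_lt_one hs]
    exact h
  · exact div_lt_self hp12 h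
  · rintro ⟨-, -, hlt⟩
    have : p12 / s / p1 + q12 / s / q2 = 1 := by
      rw [div_right_comm, div_right_comm q12, ← add_div, div_self hs.ne']
    exact hlt.ne this

lemma timeSharingRegion_ssubset_stabilityRegion (hp1 : 0 < p1) (hp12 : 0 < p12) (hq2 : 0 < q2)
    (hq12 : 0 < q12) (h : 1 < p12 / p1 + q12 / q2) :
    timeSharingRegion p1 q2 ⊂ stabilityRegion p1 p12 q2 q12 :=
  (Set.ssubset_iff_of_subset (timeSharingRegion_subset_stabilityRegion hp1 hp12 hq2 hq12 h.le)).mpr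
    (exists_mem_stabilityRegion_not_mem_timeSharingRegion hp1 hp12 hq2 hq12 h)

end

theorem stability_region_strictly_contains_time_sharing_general
    (p1 p12 q2 q12 : ℝ) (hp1 : p1 ∈ Set.Ioc (0:ℝ) 1) (hp12 : p12 ∈ Set.Ioc (0:ℝ) 1)
    (hq2 : q2 ∈ Set.Ioc (0:ℝ) 1) (hq12 : q12 ∈ Set.Ioc (0:ℝ) 1)
    (hstrict : p12 / p1 + q12 / q2 > 1) :
    {p : ℝ × ℝ | 0 ≤ p.1 ∧ 0 ≤ p.2 ∧ p.1 / p1 + p.2 / q2 < 1} ⊂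
      ({p : ℝ × ℝ | 0 ≤ p.1 ∧ 0 ≤ p.2} ∩
        ({p : ℝ × ℝ | p.1 / p1 + ((p1 - p12) / (p1 * q12)) * p.2 < 1 ∧ p.2 < q12} ∪
         {p : ℝ × ℝ | p.2 / q2 + ((q2 - q12) / (q2 * p12)) * p.1 < 1 ∧ p.1 < p12})) :=
  timeSharingRegion_ssubset_stabilityRegion hp1.1 hp12.1 hq2.1 hq12.1 hstrict

theorem stability_region_strictly_contains_time_sharing
    (p1 p12 q2 q12 : ℝ) (hp1 : p1 ∈ Set.Ioc (0:ℝ) 1) (hp12 : p12 ∈ Set.Ioc (0:ℝ) 1)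
    (hq2 : q2 ∈ Set.Ioc (0:ℝ) 1) (hq12 : q12 ∈ Set.Ioc (0:ℝ) 1)
    (h1 : p12 ≤ p1) (h2 : q12 ≤ q2)
    (hstrict : p12 / p1 + q12 / q2 > 1) :
    {p : ℝ × ℝ | 0 ≤ p.1 ∧ 0 ≤ p.2 ∧ p.1 / p1 + p.2 / q2 < 1} ⊂
      ({p : ℝ × ℝ | 0 ≤ p.1 ∧ 0 ≤ p.2} ∩
        ({p : ℝ × ℝ | p.1 / p1 + ((p1 - p12) / (p1 * q12)) * p.2 < 1 ∧ p.2 < q12} ∪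
         {p : ℝ × ℝ | p.2 / q2 + ((q2 - q12) / (q2 * p12)) * p.1 < 1 ∧ p.1 < p12})) :=
  stability_region_strictly_contains_time_sharing_general p1 p12 q2 q12 hp1 hp12 hq2 hq12 hstrict
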